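/- arXiv:1608.02779 — 4 statements merged into one kernel-verified Lean document; each statement's English description precedes it below -/
import Mathlib

section
/- The sum rule Σ_{γ ∈ Z_{≥0}^n} Φ_q(γ|β; λ,μ) = 1 holds for all β ∈ Z_{≥0}^n, where Φ_q(γ|β;λ,μ) = q^{φ(β-γ,γ)} (μ/λ)^{|γ|} (λ;q)_{|γ|}(μ/λ;q)_{|β|-|γ|}/(μ;q)_{|β|} ∏_i binom_q(β_i,γ_i). -/
/-!
Write `Φ_q(γ|β; λ, μ)` as the weight `W(γ, β) = q^{φ(β-γ,γ)} ∏ᵢ [βᵢ, γᵢ]_q` times a function of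
`|γ|` alone. The weights of all `γ ≤ β` with `|γ| = k` add up to the single q-binomial
`[|β|, k]_q`: splitting off the first coordinate, this is the q-Vandermonde convolution
`[A + B, k]_q = ∑_{a + j = k} q^{(A-a) j} [A, a]_q [B, j]_q`. What remains is the
q-Chu–Vandermonde sum `∑_k [N, k]_q (μ/λ)^k (λ;q)_k (μ/λ;q)_{N-k} = (μ;q)_N`, and both identities
follow by induction on the top index from the two q-Pascal rules.
-/

open scoped BigOperators

noncomputable section

/-- The q-Pochhammer symbol `(z;q)_m = ∏_{j=0}^{m-1} (1 - z q^j)`. -/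
def qP (q z : ℝ) (m : ℕ) : ℝ := ∏ j ∈ Finset.range m, (1 - z * q ^ j)

/-- The q-binomial coefficient, zero outside `0 ≤ k ≤ m`. -/
def qBinom (q : ℝ) (m k : ℕ) : ℝ :=
  if k ≤ m then qP q q m / (qP q q k * qP q q (m - k)) else 0

/-- `|α| = α_1 + ⋯ + α_n`. -/
def wt {n : ℕ} (α : Fin n → ℕ) : ℕ := ∑ i, α i

/-- `φ(α,β) = ∑_{i<j} α_i β_j` for integer arrays. -/
def phiZ {n : ℕ} (α β : Fin n → ℤ) : ℤ :=
  ∑ i, ∑ j, if i < j then α i * β j else 0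

/-- coercion of a nonnegative-integer array to an integer array -/
def zc {n : ℕ} (α : Fin n → ℕ) : Fin n → ℤ := fun i => (α i : ℤ)

/-- The weight function `Φ_q(γ|β; λ,μ)`. -/
def Phi {n : ℕ} (q lam mu : ℝ) (γ β : Fin n → ℕ) : ℝ :=
  q ^ (phiZ (zc β - zc γ) (zc γ)) * (mu / lam) ^ wt γ *
    (qP q lam (wt γ) * qP q (mu / lam) (wt β - wt γ) / qP q mu (wt β)) *
    ∏ i, qBinom q (β i) (γ i)

open Finset

lemma qP_zero (q z : ℝ) : qP q z 0 = 1 := rfl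

lemma qP_succ (q z : ℝ) (m : ℕ) : qP q z (m + 1) = qP q z m * (1 - z * q ^ m) :=
  prod_range_succ _ _

section QBinomial

variable {q : ℝ}

lemma qP_self_ne_zero (hq0 : 0 < q) (hq1 : q < 1) (m : ℕ) : qP q q m ≠ 0 :=
  (prod_pos fun j _ => by nlinarith [pow_le_one₀ (n := j) hq0.le hq1.le]).ne'

lemma one_sub_pow_succ_ne_zero (hq : ∀ m, qP q q m ≠ 0) (k : ℕ) : 1 - q ^ (k + 1) ≠ 0 := by
  have h := hq (k + 1)
  rw [qP_succ, ← pow_succ'] at h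
  exact right_ne_zero_of_mul h

lemma qBinom_zero_right (hq : ∀ m, qP q q m ≠ 0) (n : ℕ) : qBinom q n 0 = 1 := by
  simp [qBinom, qP_zero, hq]

lemma qBinom_of_lt {n k : ℕ} (h : n < k) : qBinom q n k = 0 :=
  if_neg (Nat.not_le.mpr h)

lemma qBinom_succ_succ_mul (hq : ∀ m, qP q q m ≠ 0) (n k : ℕ) :
    qBinom q (n + 1) (k + 1) * (1 - q ^ (k + 1)) = (1 - q ^ (n + 1)) * qBinom q n k := by
  rcases lt_or_ge n k with h | h
  · rw [qBinom_of_lt h, qBinom_of_lt (by omega)]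
    ring
  · rw [qBinom, qBinom, if_pos (by omega), if_pos h, Nat.add_sub_add_right, qP_succ, qP_succ,
      ← pow_succ', ← pow_succ']
    field_simp [hq, one_sub_pow_succ_ne_zero hq k]

lemma qBinom_succ_right_mul (hq : ∀ m, qP q q m ≠ 0) (n k : ℕ) :
    qBinom q n (k + 1) * (1 - q ^ (k + 1)) = (1 - q ^ (n - k)) * qBinom q n k := by
  rcases lt_or_ge k n with h | h
  · obtain ⟨d, rfl⟩ : ∃ d, n = k + 1 + d := ⟨n - (k + 1), by omega⟩
    rw [qBinom, qBinom, if_pos (by omega), if_pos (by omega), show k + 1 + d - k = d + 1 by omega,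
      Nat.add_sub_cancel_left, qP_succ q q d, qP_succ q q k, ← pow_succ', ← pow_succ']
    field_simp [hq, one_sub_pow_succ_ne_zero hq k, one_sub_pow_succ_ne_zero hq d]
  · rw [qBinom_of_lt (by omega), Nat.sub_eq_zero_of_le h]
    ring

lemma qBinom_succ_succ (hq : ∀ m, qP q q m ≠ 0) (n k : ℕ) :
    qBinom q (n + 1) (k + 1) = q ^ (k + 1) * qBinom q n (k + 1) + qBinom q n k := by
  rcases lt_or_ge n k with h | h
  · rw [qBinom_of_lt h, qBinom_of_lt (by omega), qBinom_of_lt (by omega)]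
    ring
  · refine mul_right_cancel₀ (one_sub_pow_succ_ne_zero hq k) ?_
    have hpow : q ^ (k + 1) * q ^ (n - k) = q ^ (n + 1) := by rw [← pow_add]; congr 1; omega
    linear_combination qBinom_succ_succ_mul hq n k - q ^ (k + 1) * qBinom_succ_right_mul hq n k
      + qBinom q n k * hpow

lemma qBinom_succ_succ' (hq : ∀ m, qP q q m ≠ 0) (n k : ℕ) :
    qBinom q (n + 1) (k + 1) = qBinom q n (k + 1) + q ^ (n - k) * qBinom q n k := by
  rcases lt_or_ge n k with h | h
  · rw [qBinom_of_lt h, qBinom_of_lt (by omega), qBinom_of_lt (by omega)]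
    ring
  · refine mul_right_cancel₀ (one_sub_pow_succ_ne_zero hq k) ?_
    have hpow : q ^ (n - k) * q ^ (k + 1) = q ^ (n + 1) := by rw [← pow_add]; congr 1; omega
    linear_combination qBinom_succ_succ_mul hq n k - qBinom_succ_right_mul hq n k
      + qBinom q n k * hpow

lemma sum_range_qBinom_succ (hq : ∀ m, qP q q m ≠ 0) (N : ℕ) (f : ℕ → ℝ) :
    ∑ k ∈ range (N + 1 + 1), qBinom q (N + 1) k * f k =
      ∑ k ∈ range (N + 1), qBinom q N k * (q ^ k * f k) +
        ∑ k ∈ range (N + 1), qBinom q N k * f (k + 1) := by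
  have hshift : ∑ k ∈ range (N + 1), qBinom q N k * (q ^ k * f k) =
      ∑ k ∈ range (N + 1), q ^ (k + 1) * qBinom q N (k + 1) * f (k + 1) + f 0 := by
    rw [sum_range_succ', sum_range_succ _ N, qBinom_of_lt (Nat.lt_succ_self N),
      qBinom_zero_right hq]
    simp only [pow_zero, one_mul, mul_zero, zero_mul, add_zero]
    congr 1
    exact sum_congr rfl fun k _ => by ring
  rw [sum_range_succ', qBinom_zero_right hq, hshift, add_right_comm, ← sum_add_distrib]
  simp only [qBinom_succ_succ hq, one_mul]
  congr 1
  exact sum_congr rfl fun k _ => by ring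

lemma sum_range_qBinom_succ' (hq : ∀ m, qP q q m ≠ 0) (N : ℕ) (f : ℕ → ℝ) :
    ∑ k ∈ range (N + 1 + 1), qBinom q (N + 1) k * f k =
      ∑ k ∈ range (N + 1), qBinom q N k * f k +
        ∑ k ∈ range (N + 1), qBinom q N k * (q ^ (N - k) * f (k + 1)) := by
  have hshift : ∑ k ∈ range (N + 1), qBinom q N k * f k =
      ∑ k ∈ range (N + 1), qBinom q N (k + 1) * f (k + 1) + f 0 := by
    rw [sum_range_succ', sum_range_succ _ N, qBinom_of_lt (Nat.lt_succ_self N),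
      qBinom_zero_right hq, zero_mul, add_zero, one_mul]
  rw [sum_range_succ', qBinom_zero_right hq, hshift, add_right_comm, ← sum_add_distrib]
  simp only [qBinom_succ_succ' hq, one_mul]
  congr 1
  exact sum_congr rfl fun k _ => by ring

theorem sum_range_qBinom_add (hq : ∀ m, qP q q m ≠ 0) (A B : ℕ) (f : ℕ → ℝ) :
    ∑ k ∈ range (A + B + 1), qBinom q (A + B) k * f k =
      ∑ a ∈ range (A + 1), qBinom q A a *
        ∑ j ∈ range (B + 1), qBinom q B j * (q ^ ((A - a) * j) * f (a + j)) := by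
  induction A generalizing f with
  | zero => simp [qBinom_zero_right hq]
  | succ A ih =>
    rw [show A + 1 + B = A + B + 1 by omega, sum_range_qBinom_succ hq, sum_range_qBinom_succ hq,
      ih, ih]
    congr 1
    · refine sum_congr rfl fun a ha => ?_
      have haA := mem_range_succ_iff.mp ha
      congr 1
      rw [mul_sum]
      refine sum_congr rfl fun j _ => ?_
      rw [show (A + 1 - a) * j = (A - a) * j + j by
        rw [show A + 1 - a = A - a + 1 by omega, add_one_mul]]
      ring
    · simp_rw [Nat.add_sub_add_right, Nat.add_right_comm _ 1]

theorem sum_range_qBinom_mul_qP (hq : ∀ m, qP q q m ≠ 0) (lam x : ℝ) (N : ℕ) :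
    ∑ k ∈ range (N + 1), qBinom q N k * (x ^ k * (qP q lam k * qP q x (N - k))) =
      qP q (lam * x) N := by
  induction N with
  | zero => simp [qBinom_zero_right hq, qP_zero]
  | succ N ih =>
    rw [sum_range_qBinom_succ' hq, ← sum_add_distrib, qP_succ, ← ih, sum_mul]
    refine sum_congr rfl fun k hk => ?_
    have hkN := mem_range_succ_iff.mp hk
    have hpow : q ^ (N - k) * q ^ k = q ^ N := by rw [← pow_add, Nat.sub_add_cancel hkN]
    rw [show N + 1 - k = N - k + 1 by omega, qP_succ q x, qP_succ q lam, ← hpow,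
      Nat.add_sub_add_right]
    ring

end QBinomial

section Weight

variable {n : ℕ}

def qBinomWeight (q : ℝ) (γ β : Fin n → ℕ) : ℝ :=
  q ^ phiZ (zc β - zc γ) (zc γ) * ∏ i, qBinom q (β i) (γ i)

lemma phiZ_succ (α δ : Fin (n + 1) → ℤ) :
    phiZ α δ = α 0 * ∑ j, Fin.tail δ j + phiZ (Fin.tail α) (Fin.tail δ) := by
  unfold phiZ
  rw [Fin.sum_univ_succ]
  congr 1
  · simp [Fin.sum_univ_succ, Fin.succ_pos, mul_sum, Fin.tail]
  · refine sum_congr rfl fun i _ => ?_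
    simp [Fin.sum_univ_succ, Fin.succ_lt_succ_iff, Fin.tail]

lemma wt_cons (a : ℕ) (g : Fin n → ℕ) : wt (Fin.cons a g : Fin (n + 1) → ℕ) = a + wt g := by
  simp [wt, Fin.sum_univ_succ]

lemma wt_succ (β : Fin (n + 1) → ℕ) : wt β = β 0 + wt (Fin.tail β) := by
  simp [wt, Fin.sum_univ_succ, Fin.tail]

lemma qBinomWeight_cons {q : ℝ} (hq : q ≠ 0) (β : Fin (n + 1) → ℕ) {a : ℕ} (ha : a ≤ β 0)
    (g : Fin n → ℕ) :
    qBinomWeight q (Fin.cons a g) β =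
      qBinom q (β 0) a * q ^ ((β 0 - a) * wt g) * qBinomWeight q g (Fin.tail β) := by
  have hphi : phiZ (zc β - zc (Fin.cons a g)) (zc (Fin.cons a g)) =
      ((β 0 - a) * wt g : ℕ) + phiZ (zc (Fin.tail β) - zc g) (zc g) := by
    rw [phiZ_succ]
    congr 1
    simp [zc, wt, Nat.cast_sub ha, Fin.tail]
  rw [qBinomWeight, qBinomWeight, hphi, zpow_add₀ hq, zpow_natCast, Fin.prod_univ_succ]
  simp only [Fin.cons_zero, Fin.cons_succ, Fin.tail]
  ring

lemma sum_Iic_fin_succ {M : Type*} [AddCommMonoid M] (β : Fin (n + 1) → ℕ)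
    (F : (Fin (n + 1) → ℕ) → M) :
    ∑ γ ∈ Iic β, F γ = ∑ a ∈ Iic (β 0), ∑ g ∈ Iic (Fin.tail β), F (Fin.cons a g) := by
  rw [← sum_product']
  refine (sum_equiv (Fin.consEquiv fun _ => ℕ) (fun p => ?_) fun _ _ => rfl).symm
  rw [mem_product, mem_Iic, mem_Iic, mem_Iic]
  exact (Fin.cons_le (α := fun _ => ℕ)).symm

end Weight

theorem sum_Iic_qBinomWeight_mul {q : ℝ} (hq0 : q ≠ 0) (hq : ∀ m, qP q q m ≠ 0) :
    ∀ {n : ℕ} (β : Fin n → ℕ) (f : ℕ → ℝ),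
      ∑ γ ∈ Iic β, qBinomWeight q γ β * f (wt γ) =
        ∑ k ∈ range (wt β + 1), qBinom q (wt β) k * f k
  | 0, β, f => by
    rw [show Iic β = {β} from eq_singleton_iff_unique_mem.mpr ⟨mem_Iic.mpr le_rfl,
      fun γ _ => Subsingleton.elim γ β⟩]
    simp [qBinomWeight, wt, phiZ, qBinom_zero_right hq]
  | n + 1, β, f => by
    rw [sum_Iic_fin_succ, ← Nat.range_succ_eq_Iic, wt_succ β, sum_range_qBinom_add hq]
    refine sum_congr rfl fun a ha => ?_
    have ih := sum_Iic_qBinomWeight_mul hq0 hq (Fin.tail β)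
      fun j => q ^ ((β 0 - a) * j) * f (a + j)
    rw [← ih, mul_sum]
    refine sum_congr rfl fun g _ => ?_
    rw [qBinomWeight_cons hq0 β (mem_range_succ_iff.mp ha), wt_cons]
    ring

/-- `Φ_q(γ|β;λ,μ)` vanishes unless `γ ≤ β`, so the sum over `ℤ_{≥0}^n` is the finite sum over
`Iic β`. -/
theorem sum_rule {n : ℕ} (q lam mu : ℝ) (hq0 : 0 < q) (hq1 : q < 1)
    (hlam : lam ≠ 0) (β : Fin n → ℕ) (hmu : qP q mu (wt β) ≠ 0) :
    ∑ γ ∈ Finset.Iic β, Phi q lam mu γ β = 1 := by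
  have hq : ∀ m, qP q q m ≠ 0 := qP_self_ne_zero hq0 hq1
  set N := wt β
  set g : ℕ → ℝ := fun k => (mu / lam) ^ k * (qP q lam k * qP q (mu / lam) (N - k))
  calc ∑ γ ∈ Iic β, Phi q lam mu γ β
      = (∑ γ ∈ Iic β, qBinomWeight q γ β * g (wt γ)) / qP q mu N := by
        rw [sum_div]
        exact sum_congr rfl fun γ _ => by simp only [Phi, qBinomWeight, g]; ring
    _ = (∑ k ∈ range (N + 1), qBinom q N k * g k) / qP q mu N := by
        rw [sum_Iic_qBinomWeight_mul hq0.ne' hq]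
    _ = 1 := by rw [sum_range_qBinom_mul_qP hq, mul_div_cancel₀ _ hlam, div_self hmu]
end
end

section
/- The identity (g_γ(λ) g_{α+β-γ}(μ) / (g_α(μ) g_β(λ))) · Φ_q(β|α+β-γ; λ,μ) = q^{φ(α-γ,β-γ)} Φ_q(γ|α; λ,μ) holds for all α,β,γ ∈ Z_{≥0}^n with γ ≤ α. -/
open scoped BigOperators

noncomputable section

/-- `g_α(μ) = μ^{-|α|} (μ;q)_{|α|} / ∏_i (q;q)_{α_i}`. -/
def gfun {n : ℕ} (q mu : ℝ) (α : Fin n → ℕ) : ℝ :=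
  mu ^ (-(wt α : ℤ)) * qP q mu (wt α) / ∏ i, qP q q (α i)

/-! The q-binomial products on the two sides are matched factor by factor through
`[a+b-c, b] (q;q)_a (q;q)_b = [a, c] (q;q)_c (q;q)_{a+b-c}`, the powers of `q` through the
bilinearity `φ(α-γ, β) = φ(α-γ, β-γ) + φ(α-γ, γ)`, and everything else cancels once
`|α+β-γ| + |γ| = |α| + |β|` is used to write all weights in terms of `|α| - |γ|`, `|β|`, `|γ|`. -/

lemma qP_self_pos {q : ℝ} (hq0 : 0 < q) (hq1 : q < 1) (m : ℕ) : 0 < qP q q m :=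
  Finset.prod_pos fun j _ => by
    have : q * q ^ j < 1 := by
      rw [← pow_succ']
      exact pow_lt_one₀ hq0.le hq1 j.succ_ne_zero
    linarith

lemma phiZ_add_right {n : ℕ} (x y z : Fin n → ℤ) : phiZ x (y + z) = phiZ x y + phiZ x z := by
  simp only [phiZ, ← Finset.sum_add_distrib, Pi.add_apply]
  refine Finset.sum_congr rfl fun i _ => Finset.sum_congr rfl fun j _ => ?_
  split_ifs <;> ring

lemma qBinom_add_sub_mul {q : ℝ} (hq0 : 0 < q) (hq1 : q < 1) {m k : ℕ} (hk : k ≤ m) (l : ℕ) :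
    qBinom q (m + l - k) l * (qP q q m * qP q q l)
      = qBinom q m k * (qP q q k * qP q q (m + l - k)) := by
  have hne : ∀ s, qP q q s ≠ 0 := fun s => (qP_self_pos hq0 hq1 s).ne'
  rw [qBinom, qBinom, if_pos (by omega), if_pos hk, show m + l - k - l = m - k by omega]
  field_simp [hne]

section Arrays

variable {n : ℕ} {α β γ : Fin n → ℕ}

lemma prod_qP_self_ne_zero {q : ℝ} (hq0 : 0 < q) (hq1 : q < 1) (α : Fin n → ℕ) :
    ∏ i, qP q q (α i) ≠ 0 :=
  Finset.prod_ne_zero_iff.2 fun _ _ => (qP_self_pos hq0 hq1 _).ne'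

lemma wt_le_wt (hγ : γ ≤ α) : wt γ ≤ wt α :=
  Finset.sum_le_sum fun i _ => hγ i

lemma wt_add_sub_add (hγ : γ ≤ α) : wt (α + β - γ) + wt γ = wt α + wt β := by
  simp only [wt, ← Finset.sum_add_distrib]
  refine Finset.sum_congr rfl fun i _ => ?_
  have : γ i ≤ α i := hγ i
  simp only [Pi.sub_apply, Pi.add_apply]
  omega

lemma zc_add_sub_sub (hγ : γ ≤ α) : zc (α + β - γ) - zc β = zc α - zc γ := by
  funext i
  have : γ i ≤ α i := hγ i
  simp only [zc, Pi.sub_apply, Pi.add_apply]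
  omega

lemma prod_qBinom_add_sub {q : ℝ} (hq0 : 0 < q) (hq1 : q < 1) (hγ : γ ≤ α) :
    ∏ i, qBinom q ((α + β - γ) i) (β i)
      = (∏ i, qBinom q (α i) (γ i)) * ((∏ i, qP q q (γ i)) * ∏ i, qP q q ((α + β - γ) i))
        / ((∏ i, qP q q (α i)) * ∏ i, qP q q (β i)) := by
  rw [eq_div_iff (mul_ne_zero (prod_qP_self_ne_zero hq0 hq1 α) (prod_qP_self_ne_zero hq0 hq1 β))]
  simp only [← Finset.prod_mul_distrib]
  exact Finset.prod_congr rfl fun i _ => qBinom_add_sub_mul hq0 hq1 (hγ i) (β i)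

end Arrays

/-- The identity (oys):
`(g_γ(λ) g_{α+β-γ}(μ) / (g_α(μ) g_β(λ))) Φ_q(β|α+β-γ;λ,μ)
  = q^{φ(α-γ,β-γ)} Φ_q(γ|α;λ,μ)` for all `γ ≤ α`. -/
theorem oys_identity {n : ℕ} (q lam mu : ℝ) (hq0 : 0 < q) (hq1 : q < 1)
    (hlam : lam ≠ 0) (hmu : mu ≠ 0) (α β γ : Fin n → ℕ) (hγ : γ ≤ α)
    (h1 : qP q mu (wt α) ≠ 0) (h2 : qP q mu (wt (α + β - γ)) ≠ 0)
    (h3 : qP q lam (wt β) ≠ 0) :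
    gfun q lam γ * gfun q mu (α + β - γ) / (gfun q mu α * gfun q lam β) *
      Phi q lam mu β (α + β - γ)
      = q ^ (phiZ (zc α - zc γ) (zc β - zc γ)) * Phi q lam mu γ α := by
  have hphi : phiZ (zc (α + β - γ) - zc β) (zc β)
      = phiZ (zc α - zc γ) (zc β - zc γ) + phiZ (zc α - zc γ) (zc γ) := by
    rw [zc_add_sub_sub hγ, ← phiZ_add_right, sub_add_cancel]
  obtain ⟨a, ha⟩ := Nat.exists_eq_add_of_le' (wt_le_wt hγ)
  have hwt : wt (α + β - γ) = a + wt β := by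
    have := wt_add_sub_add (β := β) hγ
    omega
  rw [hwt] at h2
  rw [ha] at h1
  unfold Phi gfun
  rw [hphi, zpow_add₀ hq0.ne', prod_qBinom_add_sub hq0 hq1 hγ, hwt, ha, Nat.add_sub_cancel,
    Nat.add_sub_cancel]
  simp only [zpow_neg, zpow_natCast, div_pow]
  field_simp [prod_qP_self_ne_zero hq0 hq1, h1, h2, h3]
  ring
end
end

section
/- The function Φ_q satisfies the reversal identity Φ_q(γ|α; λ,μ) = q^{φ(α,γ)-φ(γ,α)} Φ_q(γ'|α'; λ,μ), where α' is the reverse-ordered array of α. -/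
open scoped BigOperators

noncomputable section

/-- `α' = (α_n,…,α_1)`, the reverse-ordered array. -/
def rev {n : ℕ} (α : Fin n → ℕ) : Fin n → ℕ := fun i => α i.rev

/-! Reversing both arrays permutes the factors of the q-binomial product and preserves the weights,
so only the power of q changes. Reversal turns `φ(a,b)` into `φ(b,a)`, and bilinearity of `φ`
shows that the exponents `φ(α-γ,γ)` and `φ(γ,α-γ)` differ by `φ(α,γ) - φ(γ,α)`. -/

lemma phiZ_sub_left {n : ℕ} (a b c : Fin n → ℤ) :
    phiZ (a - b) c = phiZ a c - phiZ b c := by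
  simp only [phiZ, ← Finset.sum_sub_distrib]
  congr! 2 with i _ j
  split_ifs <;> simp [sub_mul]

lemma phiZ_sub_right {n : ℕ} (a b c : Fin n → ℤ) :
    phiZ a (b - c) = phiZ a b - phiZ a c := by
  simp only [phiZ, ← Finset.sum_sub_distrib]
  congr! 2 with i _ j
  split_ifs <;> simp [mul_sub]

lemma phiZ_comp_rev {n : ℕ} (a b : Fin n → ℤ) :
    phiZ (a ∘ Fin.rev) (b ∘ Fin.rev) = phiZ b a := by
  rw [phiZ, Finset.sum_comm, ← Equiv.sum_comp Fin.revPerm]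
  refine Fintype.sum_congr _ _ fun j => ?_
  rw [← Equiv.sum_comp Fin.revPerm]
  refine Fintype.sum_congr _ _ fun i => ?_
  simp only [Fin.revPerm_apply, Function.comp_apply, Fin.rev_rev, Fin.rev_lt_rev, mul_comm]

lemma zc_rev {n : ℕ} (α : Fin n → ℕ) : zc (rev α) = zc α ∘ Fin.rev := rfl

lemma wt_rev {n : ℕ} (α : Fin n → ℕ) : wt (rev α) = wt α :=
  Equiv.sum_comp Fin.revPerm α

lemma prod_qBinom_rev {n : ℕ} (q : ℝ) (α γ : Fin n → ℕ) :
    ∏ i, qBinom q (rev α i) (rev γ i) = ∏ i, qBinom q (α i) (γ i) :=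
  Equiv.prod_comp Fin.revPerm fun i => qBinom q (α i) (γ i)

lemma phiZ_rev_sub_rev {n : ℕ} (α γ : Fin n → ℕ) :
    phiZ (zc (rev α) - zc (rev γ)) (zc (rev γ)) =
      phiZ (zc α - zc γ) (zc γ) - (phiZ (zc α) (zc γ) - phiZ (zc γ) (zc α)) := by
  rw [zc_rev, zc_rev, ← Pi.sub_comp, phiZ_comp_rev, phiZ_sub_right, phiZ_sub_left]
  ring

/-- The reversal identity
`Φ_q(γ|α;λ,μ) = q^{φ(α,γ)-φ(γ,α)} Φ_q(γ'|α';λ,μ)`. -/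
theorem Phi_reversal {n : ℕ} (q lam mu : ℝ) (hq : q ≠ 0)
    (γ α : Fin n → ℕ) :
    Phi q lam mu γ α
      = q ^ (phiZ (zc α) (zc γ) - phiZ (zc γ) (zc α)) *
          Phi q lam mu (rev γ) (rev α) := by
  rw [Phi, Phi, phiZ_rev_sub_rev, wt_rev, wt_rev, prod_qBinom_rev]
  simp only [← mul_assoc, ← zpow_add₀ hq, add_sub_cancel]
end
end

section
/- In the q-boson algebra, the identity (b_+ - q^{-n+1}) b_-^n = b_-^{n-1}(1 - q^{-n+1}(b_-+k)) holds for every n ≥ 1, and consequently (b_+ - 1)(b_+ - q^{-1})⋯(b_+ - q^{1-m}) b_-^m = (q^{1-m}Y;q)_m with Y = b_- + k. -/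
open scoped BigOperators

noncomputable section

/-- The Fock space `F = ⊕_{m≥0} ℂ|m⟩`, realized as coefficient sequences:
`v : ℕ → ℝ` stands for the vector `∑_m v m · |m⟩`. -/
abbrev Fock : Type := ℕ → ℝ

/-- The creation operator `b₊`, with `b₊|m⟩ = |m+1⟩`. -/
def Bp : Module.End ℝ Fock where
  toFun v := fun i => if i = 0 then 0 else v (i - 1)
  map_add' x y := by funext i; by_cases h : i = 0 <;> simp [h]
  map_smul' c x := by funext i; by_cases h : i = 0 <;> simp [h]

/-- The annihilation operator `b₋`, with `b₋|m⟩ = (1-q^m)|m-1⟩`. -/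
def Bm (q : ℝ) : Module.End ℝ Fock where
  toFun v := fun i => (1 - q ^ (i + 1)) * v (i + 1)
  map_add' x y := by funext i; simp [mul_add]
  map_smul' c x := by funext i; simp; ring

/-- The operator `k`, with `k|m⟩ = q^m|m⟩`. -/
def Kop (q : ℝ) : Module.End ℝ Fock where
  toFun v := fun i => q ^ i * v i
  map_add' x y := by funext i; simp [mul_add]
  map_smul' c x := by funext i; simp; ring

/-- The basis vector `|m⟩`. -/
def fock (m : ℕ) : Fock := fun i => if i = m then 1 else 0

/-- The trace `Tr(X) = ∑_{m≥0} ⟨m|X|m⟩/(q;q)_m`, with pairing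
`⟨m|m'⟩ = δ_{m,m'}(q;q)_m`; equivalently the sum of diagonal coefficients. -/
def Tr (X : Module.End ℝ Fock) : ℝ := ∑' m : ℕ, X (fock m) m

/-- Operator q-Pochhammer `(X;q)_r = ∏_{j=0}^{r-1}(1 - q^j X)`. -/
def opPoch (q : ℝ) (X : Module.End ℝ Fock) : ℕ → Module.End ℝ Fock
  | 0 => 1
  | r + 1 => opPoch q X r * (1 - (q ^ r) • X)

/-- The ordered product `(b₊ - 1)(b₊ - q^{-1})⋯(b₊ - q^{1-m})`. -/
def lFact (q : ℝ) : ℕ → Module.End ℝ Fock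
  | 0 => 1
  | m + 1 => lFact q m * (Bp - (q ^ (-(m : ℤ))) • (1 : Module.End ℝ Fock))

/-! The identity only uses the relations `b₊ b₋ = 1 - k` and `b₋ k = q k b₋`: pushing `k`
through `b₋ⁿ` turns `k b₋ⁿ` into `q^{-n} b₋ⁿ k`, so
`(b₊ - q^{-n}) b₋ⁿ⁺¹ = b₋ⁿ (1 - q^{-n}(b₋ + k))`.
Peeling off the last factor of the ordered product by induction, the factors `1 - q^{-n} Y` are
all polynomials in `Y = b₋ + k`, so they commute and reassemble into `(q^{1-m} Y; q)_m`. -/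

section QBosonRelations

variable {A : Type*} [Ring A] [Algebra ℝ A] {q : ℝ} {bp bm k : A}

theorem pow_mul_eq_smul_mul_pow (hmk : bm * k = q • (k * bm)) (n : ℕ) :
    bm ^ n * k = q ^ n • (k * bm ^ n) := by
  induction n with
  | zero => simp
  | succ n ih =>
    calc bm ^ (n + 1) * k = bm ^ n * (bm * k) := by rw [pow_succ, mul_assoc]
      _ = q ^ (n + 1) • (k * bm ^ (n + 1)) := by
        rw [hmk, mul_smul_comm, ← mul_assoc, ih, smul_mul_assoc, smul_smul, mul_assoc,
          ← pow_succ', ← pow_succ]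

theorem sub_smul_one_mul_pow_succ (hpm : bp * bm = 1 - k) (hmk : bm * k = q • (k * bm))
    {n : ℕ} {c : ℝ} (hc : c * q ^ n = 1) :
    (bp - c • 1) * bm ^ (n + 1) = bm ^ n * (1 - c • (bm + k)) := by
  have hk : k * bm ^ n = c • (bm ^ n * k) := by
    rw [pow_mul_eq_smul_mul_pow hmk, smul_smul, hc, one_smul]
  calc (bp - c • 1) * bm ^ (n + 1) = bp * bm * bm ^ n - c • bm ^ (n + 1) := by
        rw [sub_mul, smul_one_mul, mul_assoc, ← pow_succ']
    _ = bm ^ n - c • (bm ^ n * k) - c • (bm ^ n * bm) := by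
        rw [hpm, sub_mul, one_mul, hk, pow_succ]
    _ = bm ^ n * (1 - c • (bm + k)) := by
        simp only [mul_sub, mul_one, mul_smul_comm, mul_add, smul_add]
        abel

end QBosonRelations

theorem Bp_mul_Bm (q : ℝ) : Bp * Bm q = 1 - Kop q := by
  ext v i
  cases i <;> simp [Bp, Bm, Kop]
  ring

theorem Bm_mul_Kop (q : ℝ) : Bm q * Kop q = q • (Kop q * Bm q) := by
  ext v i
  simp [Bm, Kop]
  ring

theorem commute_opPoch (q : ℝ) {X Z : Module.End ℝ Fock} (h : Commute X Z) (r : ℕ) :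
    Commute X (opPoch q Z r) := by
  induction r with
  | zero => exact Commute.one_right X
  | succ r ih => exact ih.mul_right ((Commute.one_right X).sub_right (h.smul_right _))

theorem opPoch_succ' (q : ℝ) (X : Module.End ℝ Fock) (r : ℕ) :
    opPoch q X (r + 1) = (1 - X) * opPoch q (q • X) r := by
  induction r with
  | zero => simp [opPoch]
  | succ r ih => rw [opPoch, ih, mul_assoc, opPoch, smul_smul, ← pow_succ]

/-- In the q-boson algebra, `(b₊ - q^{-n+1}) b₋^n = b₋^{n-1}(1 - q^{-n+1}(b₋+k))`
for every `n ≥ 1`, and consequently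
`(b₊-1)(b₊-q^{-1})⋯(b₊-q^{1-m}) b₋^m = (q^{1-m}Y;q)_m` with `Y = b₋ + k`. -/
theorem bplus_bminus_identity (q : ℝ) (hq : q ≠ 0) :
    (∀ n : ℕ, 1 ≤ n →
      (Bp - (q ^ (1 - (n : ℤ))) • (1 : Module.End ℝ Fock)) * (Bm q) ^ n
        = (Bm q) ^ (n - 1) *
            (1 - (q ^ (1 - (n : ℤ))) • (Bm q + Kop q))) ∧
    (∀ m : ℕ,
      lFact q m * (Bm q) ^ m
        = opPoch q ((q ^ (1 - (m : ℤ))) • (Bm q + Kop q)) m) := by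
  have key (s : ℕ) : (Bp - q ^ (-(s : ℤ)) • (1 : Module.End ℝ Fock)) * Bm q ^ (s + 1)
      = Bm q ^ s * (1 - q ^ (-(s : ℤ)) • (Bm q + Kop q)) :=
    sub_smul_one_mul_pow_succ (Bp_mul_Bm q) (Bm_mul_Kop q)
      (by rw [zpow_neg, zpow_natCast, inv_mul_cancel₀ (pow_ne_zero s hq)])
  have exponent (s : ℕ) : (1 : ℤ) - ((s + 1 : ℕ) : ℤ) = -(s : ℤ) := by push_cast; ring
  refine ⟨fun n hn => ?_, fun m => ?_⟩
  · obtain ⟨s, rfl⟩ := Nat.exists_eq_add_of_le' hn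
    rw [exponent, Nat.add_sub_cancel]
    exact key s
  · induction m with
    | zero => simp [lFact, opPoch]
    | succ s ih =>
      have hshift : q * q ^ (-(s : ℤ)) = q ^ (1 - (s : ℤ)) := by
        rw [sub_eq_add_neg, zpow_add₀ hq, zpow_one]
      have hcomm := commute_opPoch q
        (((Commute.one_left _).sub_left
          ((Commute.refl (Bm q + Kop q)).smul_left (q ^ (-(s : ℤ))))).smul_right
          (q ^ (1 - (s : ℤ)))) s
      rw [exponent, lFact, mul_assoc, key, ← mul_assoc, ih, ← hcomm.eq, opPoch_succ',
        smul_smul, hshift]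
end
end
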